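/- Let H be a Hilbert space and C ⊆ H a nonempty closed convex set. Let h̃ ∈ C, ξ, ξ̃ ∈ H, η > 0. Define h = argmin over ĥ ∈ C of ⟨ĥ, η ξ⟩ + (1/2)‖h̃ − ĥ‖² and h̃₊ = argmin over ĥ ∈ C of ⟨ĥ, η ξ̃⟩ + (1/2)‖h̃ − ĥ‖². Then for every ĥ ∈ C: ⟨h − ĥ, η ξ̃⟩ ≤ (1/2)‖ĥ − h̃‖² − (1/2)‖ĥ − h̃₊‖² + (η²/2)‖ξ̃ − ξ‖² − (1/2)‖h − h̃‖². -/
import Mathlib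

open scoped RealInnerProductSpace

-- variational inequality from minimality
lemma aux_vi {H : Type*} [NormedAddCommGroup H] [InnerProductSpace ℝ H]
    {C : Set H} (hCvx : Convex ℝ C) {h v : H} (hh : h ∈ C)
    (hmin : ∀ g ∈ C, 0 ≤ ⟪g - h, v⟫ + (1/2) * ‖g - h‖^2) :
    ∀ g ∈ C, 0 ≤ ⟪g - h, v⟫ := by
  intro g hg
  have key : ∀ t : ℝ, 0 < t → t ≤ 1 → 0 ≤ ⟪g - h, v⟫ + (t/2) * ‖g - h‖^2 := by
    intro t ht ht1
    have hmem : h + t • (g - h) ∈ C := by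
      have := hCvx hh hg (by linarith : (0:ℝ) ≤ 1 - t) ht.le (by ring)
      convert this using 1
      module
    have := hmin _ hmem
    rw [add_sub_cancel_left] at this
    rw [real_inner_smul_left, norm_smul] at this
    rw [Real.norm_of_nonneg ht.le] at this
    by_contra hcon
    push_neg at hcon
    nlinarith [mul_neg_of_pos_of_neg ht hcon]
  by_contra hcon
  push_neg at hcon
  set x := ⟪g - h, v⟫
  set s := ‖g - h‖^2 with hs
  have hs0 : 0 ≤ s := by positivity
  rcases eq_or_lt_of_le hs0 with hs0' | hs0'
  · have := key 1 one_pos le_rfl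
    rw [← hs0'] at this
    linarith
  · have ht : 0 < min 1 (-x / s) :=
      lt_min one_pos (div_pos (by linarith) hs0')
    have := key _ ht (min_le_left _ _)
    have h2 : min 1 (-x / s) ≤ -x / s := min_le_right _ _
    have h3 : (min 1 (-x / s)) * s ≤ -x := (le_div_iff₀ hs0').mp h2
    linarith

lemma aux_expand {H : Type*} [NormedAddCommGroup H] [InnerProductSpace ℝ H]
    (w a b c : H) :
    ⟪a, w⟫ + (1/2) * ‖c - a‖^2 - (⟪b, w⟫ + (1/2) * ‖c - b‖^2)
      = ⟪a - b, w + b - c⟫ + (1/2) * ‖a - b‖^2 := by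
  simp only [← real_inner_self_eq_norm_sq, inner_sub_left, inner_sub_right,
    inner_add_left, inner_add_right]
  have h1 := real_inner_comm a b
  have h2 := real_inner_comm a c
  have h3 := real_inner_comm b c
  have h4 := real_inner_comm a w
  have h5 := real_inner_comm b w
  linarith

theorem stmt0 {H : Type*} [NormedAddCommGroup H] [InnerProductSpace ℝ H] [CompleteSpace H]
    (C : Set H) (hCvx : Convex ℝ C) (hCcl : IsClosed C) (hCne : C.Nonempty)
    (htil : H) (hmem : htil ∈ C) (ξ ξt : H) (η : ℝ) (hη : 0 < η)
    (h : H) (hh : h ∈ C)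
    (hmin : ∀ g ∈ C, ⟪h, η • ξ⟫ + (1/2) * ‖htil - h‖^2 ≤ ⟪g, η • ξ⟫ + (1/2) * ‖htil - g‖^2)
    (htp : H) (htpmem : htp ∈ C)
    (htpmin : ∀ g ∈ C, ⟪htp, η • ξt⟫ + (1/2) * ‖htil - htp‖^2 ≤
      ⟪g, η • ξt⟫ + (1/2) * ‖htil - g‖^2) :
    ∀ hhat ∈ C, ⟪h - hhat, η • ξt⟫ ≤ (1/2) * ‖hhat - htil‖^2 - (1/2) * ‖hhat - htp‖^2
      + (η^2/2) * ‖ξt - ξ‖^2 - (1/2) * ‖h - htil‖^2 := by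
  intro hhat hch
  have vi1 : ∀ g ∈ C, 0 ≤ ⟪g - h, η • ξ + h - htil⟫ := by
    apply aux_vi hCvx hh
    intro g hg
    have := hmin g hg
    have e := aux_expand (η • ξ) g h htil
    linarith
  have vi2 : ∀ g ∈ C, 0 ≤ ⟪g - htp, η • ξt + htp - htil⟫ := by
    apply aux_vi hCvx htpmem
    intro g hg
    have := htpmin g hg
    have e := aux_expand (η • ξt) g htp htil
    linarith
  have I1 := vi1 htp htpmem
  have I2 := vi2 hhat hch
  have I3 : (0:ℝ) ≤ ‖(h - htp) - η • (ξt - ξ)‖^2 := by positivity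
  rw [← real_inner_self_eq_norm_sq] at I3
  simp only [← real_inner_self_eq_norm_sq, inner_sub_left, inner_sub_right,
    inner_add_left, inner_add_right, real_inner_smul_left, real_inner_smul_right]
    at I1 I2 I3 ⊢
  have c1 := real_inner_comm h htil
  have c2 := real_inner_comm h htp
  have c3 := real_inner_comm h hhat
  have c4 := real_inner_comm h ξ
  have c5 := real_inner_comm h ξt
  have c6 := real_inner_comm htil htp
  have c7 := real_inner_comm htil hhat
  have c8 := real_inner_comm htil ξ
  have c9 := real_inner_comm htil ξt
  have c10 := real_inner_comm htp hhat
  have c11 := real_inner_comm htp ξ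
  have c12 := real_inner_comm htp ξt
  have c13 := real_inner_comm hhat ξ
  have c14 := real_inner_comm hhat ξt
  have c15 := real_inner_comm ξ ξt
  nlinarith [I1, I2, I3, sq_nonneg η]
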